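/- For n ≤ 3, every vector u ∈ ℂ^{2^n} with u_∅ = 1 is realizable as the vector of principal minors of some n×n complex matrix; that is, there exists an n×n complex matrix A with det A_I = u_I for all I ⊆ {1,...,n}. -/

import Mathlib

/-!
For `n ≤ 2` explicit matrices work. For `n = 3` the principal minors of `A` depend on its
off-diagonal entries only through the three products `A i j * A j i` and the sum `x + y` of the
two cyclic products `x = A 0 1 * A 1 2 * A 2 0` and `y = A 0 2 * A 1 0 * A 2 1`. As `x * y` is the
product of the three `A i j * A j i`, realizing given minors amounts to finding `x, y` with
prescribed sum and product, i.e. a root of a quadratic; when one of the products `A i j * A j i`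
must vanish, an explicit matrix does the job instead.
-/

/-- The principal minor of `A` with rows and columns indexed by `I`. -/
noncomputable def principalMinor {n : ℕ} {R : Type*} [CommRing R]
    (A : Matrix (Fin n) (Fin n) R) (I : Finset (Fin n)) : R :=
  (A.submatrix (fun i : {x // x ∈ I} => (i : Fin n))
    (fun j : {x // x ∈ I} => (j : Fin n))).det

section PrincipalMinor

variable {n : ℕ} {R : Type*} [CommRing R] (A : Matrix (Fin n) (Fin n) R)

@[simp] lemma principalMinor_empty : principalMinor A ∅ = 1 :=
  Matrix.det_isEmpty

@[simp] lemma principalMinor_singleton (i : Fin n) : principalMinor A {i} = A i i :=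
  Matrix.det_unique _

lemma principalMinor_pair {i j : Fin n} (hij : i ≠ j) :
    principalMinor A {i, j} = A i i * A j j - A i j * A j i := by
  let e : Fin 2 ≃ {x // x ∈ ({i, j} : Finset (Fin n))} :=
    { toFun := ![⟨i, by simp⟩, ⟨j, by simp⟩]
      invFun := fun x => if (x : Fin n) = i then 0 else 1
      left_inv := by intro k; fin_cases k <;> simp [hij.symm]
      right_inv := by
        rintro ⟨x, hx⟩
        simp only [Finset.mem_insert, Finset.mem_singleton] at hx
        rcases hx with rfl | rfl <;> simp [hij.symm] }
  rw [principalMinor, ← Matrix.det_submatrix_equiv_self e, Matrix.det_fin_two]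
  simp [e]

@[simp] lemma principalMinor_univ : principalMinor A Finset.univ = A.det :=
  Matrix.det_submatrix_equiv_self (Equiv.subtypeUnivEquiv Finset.mem_univ) A

end PrincipalMinor

open Polynomial in
lemma exists_add_eq_and_mul_eq {K : Type*} [Field K] [IsAlgClosed K] (s q : K) :
    ∃ x y, x + y = s ∧ x * y = q := by
  have hdeg : (X ^ 2 - C s * X + C q).degree = 2 := by compute_degree!
  obtain ⟨x, hx⟩ := IsAlgClosed.exists_root _ (hdeg ▸ two_ne_zero)
  refine ⟨x, s - x, add_sub_cancel x s, ?_⟩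
  simp only [IsRoot, eval_add, eval_sub, eval_mul, eval_pow, eval_X, eval_C] at hx
  linear_combination -hx

lemma exists_offDiag_fin_three {K : Type*} [Field K] [IsAlgClosed K] (d : Fin 3 → K)
    (p₀₁ p₀₂ p₁₂ s : K) :
    ∃ A : Matrix (Fin 3) (Fin 3) K, (∀ i, A i i = d i) ∧
      A 0 1 * A 1 0 = p₀₁ ∧ A 0 2 * A 2 0 = p₀₂ ∧ A 1 2 * A 2 1 = p₁₂ ∧
      A 0 1 * A 1 2 * A 2 0 + A 0 2 * A 1 0 * A 2 1 = s := by
  by_cases h₀₁ : p₀₁ = 0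
  · exact ⟨!![d 0, 0, 1; s, d 1, p₁₂; p₀₂, 1, d 2],
      by simp [Fin.forall_fin_succ], by simp [h₀₁], by simp, by simp, by simp⟩
  by_cases h₀₂ : p₀₂ = 0
  · exact ⟨!![d 0, 1, 0; p₀₁, d 1, 1; s, p₁₂, d 2],
      by simp [Fin.forall_fin_succ], by simp, by simp [h₀₂], by simp, by simp⟩
  by_cases h₁₂ : p₁₂ = 0
  · exact ⟨!![d 0, 1, p₀₂; p₀₁, d 1, s; 1, 0, d 2],
      by simp [Fin.forall_fin_succ], by simp, by simp, by simp [h₁₂], by simp⟩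
  -- The two cyclic products `x`, `y` must satisfy `x + y = s` and `x * y = p₀₁ * p₀₂ * p₁₂`.
  obtain ⟨x, y, hsum, hprod⟩ := exists_add_eq_and_mul_eq s (p₀₁ * p₀₂ * p₁₂)
  have hx : x ≠ 0 := by
    rintro rfl
    simp_all
  refine ⟨!![d 0, 1, p₀₂ / x; p₀₁, d 1, 1; x, p₁₂, d 2],
    by simp [Fin.forall_fin_succ], by simp, by simp [hx], by simp, ?_⟩
  simp only [Matrix.of_apply, Matrix.cons_val', Matrix.cons_val_one, Matrix.cons_val_zero,
    Matrix.cons_val_fin_one, Matrix.cons_val, mul_one, one_mul]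
  field_simp
  linear_combination x * hsum - hprod

lemma exists_principalMinor_eq_fin_one {R : Type*} [CommRing R] (u : Finset (Fin 1) → R)
    (hu : u ∅ = 1) : ∃ A : Matrix (Fin 1) (Fin 1) R, ∀ I, principalMinor A I = u I := by
  refine ⟨!![u {0}], fun I => ?_⟩
  obtain rfl | rfl : I = ∅ ∨ I = {0} := by decide +revert
  · simp [hu]
  · simp

lemma exists_principalMinor_eq_fin_two {R : Type*} [CommRing R] (u : Finset (Fin 2) → R)
    (hu : u ∅ = 1) : ∃ A : Matrix (Fin 2) (Fin 2) R, ∀ I, principalMinor A I = u I := by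
  refine ⟨!![u {0}, u {0} * u {1} - u {0, 1}; 1, u {1}], fun I => ?_⟩
  obtain rfl | rfl | rfl | rfl : I = ∅ ∨ I = {0} ∨ I = {1} ∨ I = {0, 1} := by decide +revert
  · simp [hu]
  · simp
  · simp
  · simp [principalMinor_pair]

lemma exists_principalMinor_eq_fin_three {K : Type*} [Field K] [IsAlgClosed K]
    (u : Finset (Fin 3) → K) (hu : u ∅ = 1) :
    ∃ A : Matrix (Fin 3) (Fin 3) K, ∀ I, principalMinor A I = u I := by
  set p : Fin 3 → Fin 3 → K := fun i j => u {i} * u {j} - u {i, j}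
  obtain ⟨A, hdiag, h₀₁, h₀₂, h₁₂, hcyc⟩ := exists_offDiag_fin_three (fun i => u {i})
    (p 0 1) (p 0 2) (p 1 2)
    (u Finset.univ - u {0} * u {1} * u {2} + u {0} * p 1 2 + u {1} * p 0 2 + u {2} * p 0 1)
  refine ⟨A, fun I => ?_⟩
  obtain rfl | rfl | rfl | rfl | rfl | rfl | rfl | rfl :
      I = ∅ ∨ I = {0} ∨ I = {1} ∨ I = {2} ∨ I = {0, 1} ∨ I = {0, 2} ∨ I = {1, 2} ∨
        I = Finset.univ := by decide +revert
  · simp [hu]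
  · simp [hdiag]
  · simp [hdiag]
  · simp [hdiag]
  · rw [principalMinor_pair A (by decide), hdiag, hdiag, h₀₁]; ring
  · rw [principalMinor_pair A (by decide), hdiag, hdiag, h₀₂]; ring
  · rw [principalMinor_pair A (by decide), hdiag, hdiag, h₁₂]; ring
  · rw [principalMinor_univ, Matrix.det_fin_three, hdiag, hdiag, hdiag]
    linear_combination hcyc - u {2} * h₀₁ - u {1} * h₀₂ - u {0} * h₁₂

/-- For `n ≤ 3`, every vector with `u_∅ = 1` is realizable as principal minors. -/
theorem realizable_of_le_three {n : ℕ} (hn : n ≤ 3)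
    (u : Finset (Fin n) → ℂ) (hempty : u ∅ = 1) :
    ∃ A : Matrix (Fin n) (Fin n) ℂ, ∀ I : Finset (Fin n), principalMinor A I = u I := by
  interval_cases n
  · exact ⟨0, fun I => by rw [Subsingleton.elim I ∅, principalMinor_empty, hempty]⟩
  · exact exists_principalMinor_eq_fin_one u hempty
  · exact exists_principalMinor_eq_fin_two u hempty
  · exact exists_principalMinor_eq_fin_three u hempty
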